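/- Greedy bucket construction: processing a sorted multiset of m ≤ 3t+1 values where each value has multiplicity at most t, closing a bucket as soon as adding the next distinct value would exceed t elements, yields buckets each of size at most t such that any two consecutive buckets jointly contain at least t+1 elements (except possibly a degenerate last empty bucket), and hence at most 5 buckets. -/

import Mathlib

/-- One step of the greedy bucket construction: the current (open) bucket is at
the head of the accumulator; a run of equal values is merged into it if this
keeps the bucket within `t` elements, and otherwise starts a new bucket. -/
def greedyStep {V : Type*} (t : ℕ) (buckets : List (List V)) (run : List V) :
    List (List V) :=
  match buckets with
  | [] => [run]
  | b :: rest => if b.length + run.length ≤ t then (b ++ run) :: rest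
                 else run :: b :: rest

/-- Greedy bucket construction: split the sorted list into maximal runs of
equal values and greedily pack runs into buckets of at most `t` elements,
closing a bucket as soon as adding the next run would exceed `t` elements. -/
def greedyBuckets {V : Type*} [DecidableEq V] (t : ℕ) (L : List V) :
    List (List V) :=
  ((L.splitBy (· == ·)).foldl (greedyStep t) []).reverse

/-! Split `L` into its maximal runs of equal values. A run lies inside `L`, so it has at most
`t` elements, and a bucket only grows while it stays within `t`. A bucket is opened by a whole
run `r` that did not fit into the previous bucket `b`, so `t < |b| + |r|`, and later merges
lengthen the bucket without shortening its initial run. Hence consecutive buckets hold at least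
`t + 1` elements together, and `k` buckets hold at least `(t + 1) ⌊k / 2⌋` elements, which is
at most `3t + 1` only for `k ≤ 5`. -/

open List

theorem List.IsChain.getD {α : Type*} {R : α → α → Prop} {l : List α} (h : l.IsChain R)
    (d : α) (i : ℕ) (hi : i + 1 < l.length) : R (l.getD i d) (l.getD (i + 1) d) := by
  rw [getD_eq_getElem _ _ (by omega), getD_eq_getElem _ _ hi]
  exact isChain_iff_getElem.1 h i hi

theorem List.mul_length_div_two_le_sum_of_isChain {c : ℕ} :
    ∀ {l : List ℕ}, l.IsChain (fun a b => c ≤ a + b) → c * (l.length / 2) ≤ l.sum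
  | [], _ | [_], _ => by simp
  | a :: b :: l, h => by
    have hab := (isChain_cons_cons.1 h).1
    have ih := mul_length_div_two_le_sum_of_isChain (l := l) (isChain_cons_cons.1 h).2.tail
    calc c * ((a :: b :: l).length / 2) = c + c * (l.length / 2) := by
          rw [length_cons, length_cons, show (l.length + 1 + 1) / 2 = l.length / 2 + 1 by omega]
          ring
      _ ≤ a + b + l.sum := add_le_add hab ih
      _ = (a :: b :: l).sum := by simp [add_assoc]

section

variable {V : Type*}

def headRunLength [DecidableEq V] (b : List V) : ℕ :=
  (b.takeWhile (fun w => decide (b.head? = some w))).length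

theorem headRunLength_le_length [DecidableEq V] (b : List V) : headRunLength b ≤ b.length :=
  (takeWhile_prefix _).length_le

theorem headRunLength_le_append [DecidableEq V] (b r : List V) :
    headRunLength b ≤ headRunLength (b ++ r) := by
  cases b with
  | nil => simp [headRunLength]
  | cons a l =>
    simp only [headRunLength, head?_cons, takeWhile_append]
    split_ifs
    · simp only [length_append]
      exact le_add_right (takeWhile_prefix _).length_le
    · exact le_rfl

theorem headRunLength_replicate [DecidableEq V] (n : ℕ) (a : V) :
    headRunLength (replicate n a) = n := by
  cases n <;> simp [headRunLength, replicate_succ]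

theorem exists_eq_replicate_of_mem_splitBy [DecidableEq V] {L r : List V}
    (hr : r ∈ L.splitBy (· == ·)) : ∃ a, r = replicate r.length a := by
  have hchain : r.IsChain (· = ·) := by simpa using isChain_of_mem_splitBy hr
  obtain ⟨a, l, rfl⟩ := exists_cons_of_ne_nil (ne_nil_of_mem_splitBy hr)
  exact ⟨a, isChain_eq_iff_eq_replicate.1 hchain a rfl⟩

theorem length_le_of_mem_splitBy [DecidableEq V] {t : ℕ} {L r : List V}
    (hcount : ∀ v, L.count v ≤ t) (hr : r ∈ L.splitBy (· == ·)) : r.length ≤ t := by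
  obtain ⟨a, ha⟩ := exists_eq_replicate_of_mem_splitBy hr
  calc r.length = r.count a := by rw [ha, count_replicate_self, length_replicate]
    _ ≤ L.count a := by
      conv_rhs => rw [← flatten_splitBy (· == ·) L]
      exact (sublist_flatten_of_mem hr).count_le a
    _ ≤ t := hcount a

section GreedyStep

variable (t : ℕ)

theorem length_le_of_mem_greedyStep {acc : List (List V)} {r : List V}
    (hacc : ∀ b ∈ acc, b.length ≤ t) (hr : r.length ≤ t) :
    ∀ b ∈ greedyStep t acc r, b.length ≤ t := by
  cases acc with
  | nil => simpa [greedyStep]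
  | cons b rest =>
    simp only [greedyStep]
    split_ifs <;> simp_all

theorem flatten_reverse_greedyStep (acc : List (List V)) (r : List V) :
    (greedyStep t acc r).reverse.flatten = acc.reverse.flatten ++ r := by
  cases acc with
  | nil => simp [greedyStep]
  | cons b rest =>
    simp only [greedyStep]
    split_ifs <;> simp

theorem isChain_reverse_greedyStep [DecidableEq V] {acc : List (List V)} {r : List V}
    (hacc : acc.reverse.IsChain (fun b b' => t < b.length + headRunLength b'))
    (hr : headRunLength r = r.length) :
    (greedyStep t acc r).reverse.IsChain (fun b b' => t < b.length + headRunLength b') := by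
  rw [isChain_reverse] at hacc ⊢
  cases acc with
  | nil => simp [greedyStep]
  | cons b rest =>
    simp only [greedyStep]
    split_ifs with h
    · rw [isChain_cons] at hacc ⊢
      exact ⟨fun c hc => (hacc.1 c hc).trans_le (by grw [← headRunLength_le_append]), hacc.2⟩
    · exact isChain_cons_cons.2 ⟨by omega, hacc⟩

theorem length_le_of_mem_foldl_greedyStep {rs acc : List (List V)}
    (hrs : ∀ r ∈ rs, r.length ≤ t) (hacc : ∀ b ∈ acc, b.length ≤ t) :
    ∀ b ∈ rs.foldl (greedyStep t) acc, b.length ≤ t := by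
  induction rs generalizing acc with
  | nil => exact hacc
  | cons r rs ih =>
    exact ih (fun r' hr' => hrs r' (mem_cons_of_mem _ hr'))
      (length_le_of_mem_greedyStep t hacc (hrs r mem_cons_self))

theorem flatten_reverse_foldl_greedyStep (rs acc : List (List V)) :
    (rs.foldl (greedyStep t) acc).reverse.flatten = acc.reverse.flatten ++ rs.flatten := by
  induction rs generalizing acc with
  | nil => simp
  | cons r rs ih => simp [ih, flatten_reverse_greedyStep]

theorem isChain_reverse_foldl_greedyStep [DecidableEq V] {rs acc : List (List V)}
    (hrs : ∀ r ∈ rs, headRunLength r = r.length)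
    (hacc : acc.reverse.IsChain (fun b b' => t < b.length + headRunLength b')) :
    (rs.foldl (greedyStep t) acc).reverse.IsChain
      (fun b b' => t < b.length + headRunLength b') := by
  induction rs generalizing acc with
  | nil => exact hacc
  | cons r rs ih =>
    exact ih (fun r' hr' => hrs r' (mem_cons_of_mem _ hr'))
      (isChain_reverse_greedyStep t hacc (hrs r mem_cons_self))

end GreedyStep

section GreedyBuckets

variable [DecidableEq V] (t : ℕ) (L : List V)

theorem flatten_greedyBuckets : (greedyBuckets t L).flatten = L := by
  simp [greedyBuckets, flatten_reverse_foldl_greedyStep, flatten_splitBy]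

theorem length_le_of_mem_greedyBuckets (hcount : ∀ v, L.count v ≤ t) :
    ∀ b ∈ greedyBuckets t L, b.length ≤ t := by
  simp only [greedyBuckets, mem_reverse]
  exact length_le_of_mem_foldl_greedyStep t
    (fun r hr => length_le_of_mem_splitBy hcount hr) (by simp)

theorem isChain_greedyBuckets :
    (greedyBuckets t L).IsChain (fun b b' => t < b.length + headRunLength b') := by
  refine isChain_reverse_foldl_greedyStep t (fun r hr => ?_) (by simp)
  obtain ⟨a, ha⟩ := exists_eq_replicate_of_mem_splitBy hr
  rw [ha, headRunLength_replicate, length_replicate]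

end GreedyBuckets

end

theorem greedyBuckets_spec_general {V : Type*} [LinearOrder V] (t : ℕ) (L : List V)
    (hlen : L.length ≤ 3 * t + 1)
    (hcount : ∀ v : V, L.count v ≤ t) :
    (∀ b ∈ greedyBuckets t L, b.length ≤ t) ∧
    (∀ i, i + 1 < (greedyBuckets t L).length →
      t < ((greedyBuckets t L).getD i []).length +
        (((greedyBuckets t L).getD (i + 1) []).takeWhile
          (fun w => decide (((greedyBuckets t L).getD (i + 1) []).head? = some w))).length) ∧
    (∀ i, i + 1 < (greedyBuckets t L).length →
      t + 1 ≤ ((greedyBuckets t L).getD i []).length +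
        ((greedyBuckets t L).getD (i + 1) []).length) ∧
    (greedyBuckets t L).length ≤ 5 := by
  have hchain := isChain_greedyBuckets t L
  have hpair : (greedyBuckets t L).IsChain (fun b b' => t + 1 ≤ b.length + b'.length) :=
    hchain.imp fun b b' h => by have := headRunLength_le_length b'; omega
  refine ⟨length_le_of_mem_greedyBuckets t L hcount, hchain.getD [], hpair.getD [], ?_⟩
  have hsum : ((greedyBuckets t L).map length).sum = L.length := by
    rw [← length_flatten, flatten_greedyBuckets]
  have hmass := mul_length_div_two_le_sum_of_isChain (isChain_map length |>.2 hpair)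
  rw [length_map, hsum] at hmass
  have : (greedyBuckets t L).length / 2 < 3 := Nat.lt_of_mul_lt_mul_left (a := t + 1) (by omega)
  omega

/-- on a sorted list of at most `3t+1` values in which each value
occurs at most `t` times, the greedy construction yields buckets each of size
at most `t`, every bucket together with the run starting the next bucket has
more than `t` elements (so consecutive buckets jointly hold at least `t+1`
elements), and there are at most `5` buckets. -/
theorem greedyBuckets_spec {V : Type*} [LinearOrder V] (t : ℕ) (L : List V)
    (hsorted : L.Pairwise (· ≤ ·)) (hlen : L.length ≤ 3 * t + 1)
    (hcount : ∀ v : V, L.count v ≤ t) :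
    (∀ b ∈ greedyBuckets t L, b.length ≤ t) ∧
    (∀ i, i + 1 < (greedyBuckets t L).length →
      t < ((greedyBuckets t L).getD i []).length +
        (((greedyBuckets t L).getD (i + 1) []).takeWhile
          (fun w => decide (((greedyBuckets t L).getD (i + 1) []).head? = some w))).length) ∧
    (∀ i, i + 1 < (greedyBuckets t L).length →
      t + 1 ≤ ((greedyBuckets t L).getD i []).length +
        ((greedyBuckets t L).getD (i + 1) []).length) ∧
    (greedyBuckets t L).length ≤ 5 :=
  greedyBuckets_spec_general t L hlen hcount
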